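/- arXiv:2212.01301 — 2 statements merged into one kernel-verified Lean document; each statement's English description precedes it below -/
import Mathlib

section
/- For every k ≥ 1 and all semilinear sets Q₁, Q₂ ⊆ ℕ^k, the intersection Q₁ ∩ Q₂ is a semilinear subset of ℕ^k. -/
/-- A set `Q ⊆ ℕ^α` is linear if it has a constant vector `v₀` and finitely many
period vectors `v₁, …, v_l` with `Q = {v₀ + i₁v₁ + ⋯ + i_l v_l}`. -/
def IsLinearSet' {α : Type*} (Q : Set (α → ℕ)) : Prop :=
  ∃ (v₀ : α → ℕ) (l : ℕ) (v : Fin l → α → ℕ),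
    Q = { x | ∃ c : Fin l → ℕ, x = v₀ + ∑ j, c j • v j }

/-- A set is semilinear if it is a finite union of linear sets. -/
def IsSemilinearSet' {α : Type*} (Q : Set (α → ℕ)) : Prop :=
  ∃ (n : ℕ) (Qs : Fin n → Set (α → ℕ)),
    (∀ i, IsLinearSet' (Qs i)) ∧ Q = ⋃ i, Qs i

open Classical in
/-- The Parikh image of a word: `parikhWord w a = |w|_a`. -/
noncomputable def parikhWord {σ : Type*} (w : List σ) : σ → ℕ :=
  fun a => w.count a

/-- A language is semilinear if its Parikh image is a semilinear set. -/
def IsSemilinearLanguage {σ : Type*} (L : Set (List σ)) : Prop :=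
  IsSemilinearSet' (parikhWord '' L)

/-! The definitions above agree with Mathlib's `IsLinearSet` and `IsSemilinearSet` (a family of
periods `v` is the matrix whose columns are the `v j`), and Mathlib proves that semilinear sets
are closed under intersection (`IsSemilinearSet.inter`, after Ginsburg and Spanier). -/

open Matrix

variable {α : Type*}

theorem sum_smul_eq_transpose_mulVec {l : ℕ} (v : Fin l → α → ℕ) (c : Fin l → ℕ) :
    ∑ j, c j • v j = (of v)ᵀ *ᵥ c := by
  ext a
  simp [Matrix.mulVec, dotProduct, Finset.sum_apply, mul_comm]

theorem isLinearSet'_iff_isLinearSet {Q : Set (α → ℕ)} : IsLinearSet' Q ↔ IsLinearSet Q := by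
  rw [Nat.isLinearSet_iff_exists_matrix]
  refine exists₂_congr fun v₀ l =>
    ⟨fun ⟨v, hQ⟩ => ⟨(of v)ᵀ, ?_⟩, fun ⟨A, hQ⟩ => ⟨fun j a => A a j, ?_⟩⟩
  · simp_rw [hQ, sum_smul_eq_transpose_mulVec, eq_comm (a := _ + _)]
  · simp_rw [hQ, sum_smul_eq_transpose_mulVec, eq_comm (a := _ + _)]
    rfl

theorem isSemilinearSet'_iff_isSemilinearSet {Q : Set (α → ℕ)} :
    IsSemilinearSet' Q ↔ IsSemilinearSet Q := by
  constructor
  · rintro ⟨n, Qs, hQs, rfl⟩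
    exact .iUnion fun i => (isLinearSet'_iff_isLinearSet.1 (hQs i)).isSemilinearSet
  · rintro ⟨S, hS, hSlin, rfl⟩
    obtain ⟨n, f, rfl⟩ := hS.fin_embedding
    exact ⟨n, f, fun i => isLinearSet'_iff_isLinearSet.2 (hSlin _ ⟨i, rfl⟩), Set.sUnion_range f⟩

theorem semilinearSet_inter_general {k : ℕ} (Q₁ Q₂ : Set (Fin k → ℕ))
    (h₁ : IsSemilinearSet' Q₁) (h₂ : IsSemilinearSet' Q₂) :
    IsSemilinearSet' (Q₁ ∩ Q₂) := by
  rw [isSemilinearSet'_iff_isSemilinearSet] at h₁ h₂ ⊢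
  exact h₁.inter h₂

/-- For every k ≥ 1 and all semilinear sets Q₁, Q₂ ⊆ ℕ^k, the
intersection Q₁ ∩ Q₂ is a semilinear subset of ℕ^k. -/
theorem semilinearSet_inter {k : ℕ} (hk : 1 ≤ k) (Q₁ Q₂ : Set (Fin k → ℕ))
    (h₁ : IsSemilinearSet' Q₁) (h₂ : IsSemilinearSet' Q₂) :
    IsSemilinearSet' (Q₁ ∩ Q₂) :=
  semilinearSet_inter_general Q₁ Q₂ h₁ h₂
end

section
/- Over the two-letter alphabet Σ = {a, #}, let L = {a¹#a²#⋯#a^k# : k ≥ 1}. Then the complement Σ* − L is a semilinear language. (Together with the non-semilinearity of L, this shows the class of semilinear languages is not closed under complement.) -/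
/-- The word a¹#a²#⋯#a^k# over the alphabet Fin 2, where a = 0 and # = 1. -/
def stairWord (k : ℕ) : List (Fin 2) :=
  ((List.range k).map (fun i => List.replicate (i + 1) (0 : Fin 2) ++ [(1 : Fin 2)])).flatten

theorem IsLinearSet'.isSemilinearSet' {α : Type*} {Q : Set (α → ℕ)} (hQ : IsLinearSet' Q) :
    IsSemilinearSet' Q :=
  ⟨1, fun _ => Q, fun _ => hQ, (Set.iUnion_const Q).symm⟩

open Classical in
theorem isLinearSet'_univ {α : Type*} [Fintype α] : IsLinearSet' (Set.univ : Set (α → ℕ)) := by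
  let e := Fintype.equivFin α
  refine ⟨0, Fintype.card α, fun j => Pi.single (e.symm j) 1, ?_⟩
  refine (Set.eq_univ_of_forall fun x => ?_).symm
  refine ⟨fun j => x (e.symm j), ?_⟩
  simp only [zero_add, ← Pi.single_smul', smul_eq_mul, mul_one]
  exact ((e.symm.sum_comp fun i => Pi.single i (x i)).trans (Finset.univ_sum_single x)).symm

theorem isSemilinearSet'_univ {α : Type*} [Fintype α] :
    IsSemilinearSet' (Set.univ : Set (α → ℕ)) :=
  isLinearSet'_univ.isSemilinearSet'

theorem parikhWord_append {σ : Type*} (u v : List σ) :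
    parikhWord (u ++ v) = parikhWord u + parikhWord v := by
  funext a
  simp [parikhWord, List.count_append]

theorem parikhWord_replicate {σ : Type*} [DecidableEq σ] (n : ℕ) (a : σ) :
    parikhWord (List.replicate n a) = Pi.single a n := by
  funext b
  rw [Pi.single_apply]
  split_ifs with hba
  · simp [parikhWord, hba]
  · simp [parikhWord, List.count_replicate, Ne.symm hba]

theorem stairWord_succ (k : ℕ) :
    stairWord (k + 1) = stairWord k ++ (List.replicate (k + 1) 0 ++ [1]) := by
  simp [stairWord, List.range_succ]

theorem stairWord_getLast?_of_pos {k : ℕ} (hk : 0 < k) : (stairWord k).getLast? = some 1 := by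
  obtain ⟨k, rfl⟩ := Nat.exists_eq_add_of_lt hk
  rw [stairWord_succ, ← List.append_assoc, List.getLast?_concat]

theorem zero_mem_stairWord_of_pos {k : ℕ} (hk : 0 < k) : 0 ∈ stairWord k := by
  obtain ⟨k, rfl⟩ := Nat.exists_eq_add_of_lt hk
  simp [stairWord_succ]

theorem replicate_append_replicate_ne_stairWord (m n : ℕ) {k : ℕ} (hk : 0 < k) :
    List.replicate n 1 ++ List.replicate m 0 ≠ stairWord k := by
  intro h
  cases m with
  | zero => simpa [← h] using zero_mem_stairWord_of_pos hk
  | succ m =>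
    have hlast := stairWord_getLast?_of_pos hk
    rw [← h, List.replicate_succ', ← List.append_assoc, List.getLast?_concat] at hlast
    exact absurd (Option.some.inj hlast) (by decide)

/-- the complement of the language {a¹#a²#⋯#a^k# : k ≥ 1} is semilinear. -/
theorem stair_compl_semilinear :
    IsSemilinearLanguage
      ({ w : List (Fin 2) | ∃ k : ℕ, 1 ≤ k ∧ w = stairWord k }ᶜ) := by
  have himage : parikhWord '' { w : List (Fin 2) | ∃ k : ℕ, 1 ≤ k ∧ w = stairWord k }ᶜ
      = Set.univ := by
    refine Set.eq_univ_of_forall fun x =>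
      ⟨List.replicate (x 1) 1 ++ List.replicate (x 0) 0, ?_, ?_⟩
    · rintro ⟨k, hk, hw⟩
      exact replicate_append_replicate_ne_stairWord (x 0) (x 1) hk hw
    · rw [parikhWord_append, parikhWord_replicate, parikhWord_replicate, add_comm,
        ← Fin.sum_univ_two (fun i => Pi.single i (x i)), Finset.univ_sum_single]
  rw [IsSemilinearLanguage, himage]
  exact isSemilinearSet'_univ
end
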